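/- Let ρ : (0,1] → ℝ be a nonnegative measurable function such that r ↦ r³ρ(r) is integrable on (0,1). Let r* ∈ (0,1], δ > 0, and k ∈ ℤ² \ {0} satisfy π ≤ δ|k| ≤ π/r*. Then δ² λ_δ(k) ≥ 4 (arccos(1/3) − π/3) ∫₀^{r*} r ρ(r) (1 − cos r) dr. -/

import Mathlib

/-!
For `θ ≤ arccos (1/3)` the frequency `c = δ |k| cos θ` satisfies `1 ≤ c` and `c r* ≤ π`,
so for `r ≤ r*` both `r` and `r c` lie in `[0, π]`, where `cos` is decreasing:
`1 - cos (r c) ≥ 1 - cos r`. Since the integrand of `λ_δ` is nonnegative, discarding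
`θ > arccos (1/3)` and `r > r*` gives
`δ² λ_δ(k) ≥ 4 arccos (1/3) ∫₀^{r*} r ρ(r) (1 - cos r) dr`.
The bound `1 - cos x ≤ x² / 2` dominates the integrand by `r³ ρ(r)`, which makes the inner
integral continuous in `c`.
-/

open Real MeasureTheory

/-- Euclidean norm of a nonzero integer vector `k ∈ ℤ²`. -/
noncomputable def knorm2 (k : ℤ × ℤ) : ℝ :=
  Real.sqrt ((k.1 : ℝ) ^ 2 + (k.2 : ℝ) ^ 2)

/-- The 2D Fourier symbol of the nonlocal diffusion operator:
`λ_δ(k) = (4/δ²) ∫₀^{π/2} ∫₀¹ r ρ(r) (1 − cos(r δ |k| cos θ)) dr dθ`. -/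
noncomputable def lambdaDelta2 (ρ : ℝ → ℝ) (δ κ : ℝ) : ℝ :=
  (4 / δ ^ 2) * ∫ θ in (0:ℝ)..(π / 2), ∫ r in (0:ℝ)..1,
    r * ρ r * (1 - Real.cos (r * δ * κ * Real.cos θ))

open Set Filter Topology intervalIntegral
open scoped Interval

lemma norm_mul_one_sub_cos_le {r p c B : ℝ} (hr : 0 ≤ r) (hp : 0 ≤ p) (hc : c ^ 2 ≤ B) :
    ‖r * p * (1 - cos (r * c))‖ ≤ B / 2 * (r ^ 3 * p) := by
  rw [Real.norm_of_nonneg (mul_nonneg (mul_nonneg hr hp) (sub_nonneg.2 (cos_le_one _)))]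
  calc r * p * (1 - cos (r * c)) ≤ r * p * ((r * c) ^ 2 / 2) := by
        gcongr; linarith [one_sub_sq_div_two_le_cos (x := r * c)]
    _ = c ^ 2 / 2 * (r ^ 3 * p) := by ring
    _ ≤ B / 2 * (r ^ 3 * p) := by gcongr

noncomputable def radialSymbol (ρ : ℝ → ℝ) (c : ℝ) : ℝ :=
  ∫ r in (0:ℝ)..1, r * ρ r * (1 - cos (r * c))

lemma sq_mul_lambdaDelta2 (ρ : ℝ → ℝ) {δ : ℝ} (hδ : δ ≠ 0) (κ : ℝ) :
    δ ^ 2 * lambdaDelta2 ρ δ κ =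
      4 * ∫ θ in (0:ℝ)..(π / 2), radialSymbol ρ (δ * κ * cos θ) := by
  unfold radialSymbol
  rw [lambdaDelta2, ← mul_assoc, mul_div_cancel₀ _ (pow_ne_zero 2 hδ)]
  congr! 2 with θ
  simp only [mul_assoc]

section radialSymbol

variable {ρ : ℝ → ℝ} (hnonneg : ∀ r ∈ Ioc (0:ℝ) 1, 0 ≤ ρ r)
include hnonneg

lemma norm_radialIntegrand_le {c B : ℝ} (hc : c ^ 2 ≤ B) :
    ∀ᵐ r, r ∈ Ι (0:ℝ) 1 →
      ‖r * ρ r * (1 - cos (r * c))‖ ≤ B / 2 * (r ^ 3 * ρ r) := by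
  refine Eventually.of_forall fun r hr => ?_
  rw [uIoc_of_le zero_le_one] at hr
  exact norm_mul_one_sub_cos_le hr.1.le (hnonneg r hr) hc

lemma mul_apply_nonneg_of_mem_Icc {r : ℝ} (hr : r ∈ Icc (0:ℝ) 1) : 0 ≤ r * ρ r := by
  obtain rfl | hr0 := hr.1.eq_or_lt
  · simp
  exact mul_nonneg hr0.le (hnonneg r ⟨hr0, hr.2⟩)

lemma radialIntegrand_nonneg (c : ℝ) {r : ℝ} (hr : r ∈ Icc (0:ℝ) 1) :
    0 ≤ r * ρ r * (1 - cos (r * c)) :=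
  mul_nonneg (mul_apply_nonneg_of_mem_Icc hnonneg hr) (sub_nonneg.2 (cos_le_one _))

lemma radialSymbol_nonneg (c : ℝ) : 0 ≤ radialSymbol ρ c :=
  integral_nonneg zero_le_one fun _ hr => radialIntegrand_nonneg hnonneg c hr

variable (hmeas : Measurable ρ) (hint : IntervalIntegrable (fun r => r ^ 3 * ρ r) volume 0 1)
include hmeas hint

lemma intervalIntegrable_radialIntegrand (c : ℝ) :
    IntervalIntegrable (fun r => r * ρ r * (1 - cos (r * c))) volume 0 1 :=
  (hint.const_mul (c ^ 2 / 2)).mono_fun' (by fun_prop)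
    ((ae_restrict_iff' measurableSet_uIoc).2 (norm_radialIntegrand_le hnonneg le_rfl))

lemma continuous_radialSymbol : Continuous (radialSymbol ρ) := by
  refine continuous_iff_continuousAt.2 fun c₀ => ?_
  have hnear : ∀ᶠ c in 𝓝 c₀, c ^ 2 ≤ (|c₀| + 1) ^ 2 := by
    filter_upwards [Metric.ball_mem_nhds c₀ one_pos] with c hc
    rw [Metric.mem_ball, Real.dist_eq] at hc
    rw [sq_le_sq, abs_of_nonneg (by positivity : (0:ℝ) ≤ |c₀| + 1)]
    linarith [abs_sub_abs_le_abs_sub c c₀]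
  refine continuousAt_of_dominated_interval
    (bound := fun r => (|c₀| + 1) ^ 2 / 2 * (r ^ 3 * ρ r))
    (Eventually.of_forall fun c => by fun_prop) ?_ (hint.const_mul _)
    (Eventually.of_forall fun r _ => by fun_prop)
  filter_upwards [hnear] with c hc
  exact norm_radialIntegrand_le hnonneg hc

lemma integral_le_radialSymbol {rs c : ℝ} (hrs : rs ∈ Icc (0:ℝ) 1) (hc : 1 ≤ c)
    (hcrs : c * rs ≤ π) :
    ∫ r in (0:ℝ)..rs, r * ρ r * (1 - cos r) ≤ radialSymbol ρ c := by
  have hfi := intervalIntegrable_radialIntegrand hnonneg hmeas hint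
  have hsub : uIcc 0 rs ⊆ uIcc (0:ℝ) 1 := uIcc_subset_uIcc left_mem_uIcc (by simpa using hrs)
  calc ∫ r in (0:ℝ)..rs, r * ρ r * (1 - cos r)
      ≤ ∫ r in (0:ℝ)..rs, r * ρ r * (1 - cos (r * c)) := by
        refine integral_mono_on hrs.1 (by simpa using (hfi 1).mono_set hsub)
          ((hfi c).mono_set hsub) fun r hr => ?_
        have hr1 : r ∈ Icc (0:ℝ) 1 := ⟨hr.1, hr.2.trans hrs.2⟩
        have hrc : r * c ≤ π := by nlinarith [hr.1, hr.2]
        gcongr 2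
        · exact mul_apply_nonneg_of_mem_Icc hnonneg hr1
        · exact cos_le_cos_of_nonneg_of_le_pi hr.1 hrc (le_mul_of_one_le_right hr.1 hc)
    _ ≤ radialSymbol ρ c :=
        integral_mono_interval le_rfl hrs.1 hrs.2
          ((ae_restrict_iff' measurableSet_Ioc).2 <| Eventually.of_forall fun _ hr =>
            radialIntegrand_nonneg hnonneg c (Ioc_subset_Icc_self hr))
          (hfi c)

lemma arccos_mul_integral_le_integral_radialSymbol {rs m : ℝ} (hrs : rs ∈ Icc (0:ℝ) 1)
    (hm : π ≤ m) (hmrs : m * rs ≤ π) :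
    arccos (1 / 3) * ∫ r in (0:ℝ)..rs, r * ρ r * (1 - cos r)
      ≤ ∫ θ in (0:ℝ)..(π / 2), radialSymbol ρ (m * cos θ) := by
  set a := arccos (1 / 3)
  have hcont : Continuous fun θ => radialSymbol ρ (m * cos θ) :=
    (continuous_radialSymbol hnonneg hmeas hint).comp (by fun_prop)
  calc a * ∫ r in (0:ℝ)..rs, r * ρ r * (1 - cos r)
      = ∫ _ in (0:ℝ)..a, ∫ r in (0:ℝ)..rs, r * ρ r * (1 - cos r) := by simp
    _ ≤ ∫ θ in (0:ℝ)..a, radialSymbol ρ (m * cos θ) := by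
        refine integral_mono_on (arccos_nonneg _) intervalIntegrable_const
          (hcont.intervalIntegrable _ _) fun θ hθ => ?_
        have hcos : 1 / 3 ≤ cos θ := by
          have := cos_le_cos_of_nonneg_of_le_pi hθ.1 (arccos_le_pi _) hθ.2
          rwa [cos_arccos (by norm_num) (by norm_num)] at this
        have hm0 : 0 ≤ m * rs := mul_nonneg (pi_pos.le.trans hm) hrs.1
        refine integral_le_radialSymbol hnonneg hmeas hint hrs (by nlinarith [pi_gt_three]) ?_
        nlinarith [mul_nonneg (sub_nonneg.2 (cos_le_one θ)) hm0]
    _ ≤ ∫ θ in (0:ℝ)..(π / 2), radialSymbol ρ (m * cos θ) :=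
        integral_mono_interval le_rfl (arccos_nonneg _) (arccos_le_pi_div_two.2 (by norm_num))
          (Eventually.of_forall fun _ => radialSymbol_nonneg hnonneg _)
          (hcont.intervalIntegrable _ _)

end radialSymbol

theorem lambdaDelta2_bound_midrange (ρ : ℝ → ℝ) (hmeas : Measurable ρ)
    (hnonneg : ∀ r ∈ Set.Ioc (0:ℝ) 1, 0 ≤ ρ r)
    (hint : IntervalIntegrable (fun r => r ^ 3 * ρ r) volume 0 1)
    (rs : ℝ) (hrs : rs ∈ Set.Ioc (0:ℝ) 1)
    (δ : ℝ) (hδ : 0 < δ) (k : ℤ × ℤ)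
    (hlow : π ≤ δ * knorm2 k) (hhigh : δ * knorm2 k ≤ π / rs) :
    4 * (Real.arccos (1 / 3) - π / 3) *
        (∫ r in (0:ℝ)..rs, r * ρ r * (1 - Real.cos r))
      ≤ δ ^ 2 * lambdaDelta2 ρ δ (knorm2 k) := by
  have hC : 0 ≤ ∫ r in (0:ℝ)..rs, r * ρ r * (1 - cos r) :=
    integral_nonneg hrs.1.le fun r hr =>
      mul_nonneg (mul_apply_nonneg_of_mem_Icc hnonneg ⟨hr.1, hr.2.trans hrs.2⟩)
        (sub_nonneg.2 (cos_le_one r))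
  have hmid := arccos_mul_integral_le_integral_radialSymbol hnonneg hmeas hint
    (Ioc_subset_Icc_self hrs) hlow ((le_div_iff₀ hrs.1).1 hhigh)
  rw [sq_mul_lambdaDelta2 ρ hδ.ne']
  nlinarith [pi_pos]
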